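/- arXiv:2309.11264 — 7 statements merged into one kernel-verified Lean document; each statement's English description precedes it below -/
import Mathlib

section
/- Let n ≥ 2 and let Z ⊆ ℝⁿ be a bounded, open, nonempty Lipschitz set. Then Z satisfies the interior corkscrew condition: there exists a constant c > 0 such that for every boundary point z ∈ ∂Z and every radius 0 < r < diam(Z) there exists a point z̃ ∈ Z with the closed ball B̄(z̃, c·r) contained in Z ∩ B(z, r). -/
open Metric Set

noncomputable section

/-- An open set `Z ⊆ ℝⁿ` is a Lipschitz set if near every boundary point it is,
in a suitable cylinder, the subgraph of a Lipschitz function. -/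
def IsLipschitzSet {n : ℕ} (Z : Set (EuclideanSpace ℝ (Fin n))) : Prop :=
  ∀ z ∈ frontier Z,
    ∃ (ν : EuclideanSpace ℝ (Fin n)) (rt h : ℝ) (L : NNReal)
      (g : EuclideanSpace ℝ (Fin n) → ℝ),
      ‖ν‖ = 1 ∧ 0 < rt ∧ 0 < h ∧ LipschitzWith L g ∧ g 0 = 0 ∧
      Z ∩ {p | ∃ (x : EuclideanSpace ℝ (Fin n)) (y : ℝ), (inner ℝ x ν : ℝ) = 0 ∧
            ‖x‖ < rt ∧ -h < y ∧ y < h ∧ p = z + x + y • ν}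
        = {p | ∃ (x : EuclideanSpace ℝ (Fin n)) (y : ℝ), (inner ℝ x ν : ℝ) = 0 ∧
            ‖x‖ < rt ∧ -h < y ∧ y < g x ∧ p = z + x + y • ν} ∧
      frontier Z ∩ {p | ∃ (x : EuclideanSpace ℝ (Fin n)) (y : ℝ), (inner ℝ x ν : ℝ) = 0 ∧
            ‖x‖ < rt ∧ -h < y ∧ y < h ∧ p = z + x + y • ν}
        = {p | ∃ (x : EuclideanSpace ℝ (Fin n)) (y : ℝ), (inner ℝ x ν : ℝ) = 0 ∧
            ‖x‖ < rt ∧ -h < y ∧ y < h ∧ y = g x ∧ p = z + x + y • ν}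

/-!
Near a boundary point `w`, `Z` is the subgraph of an `L`-Lipschitz function `g` inside a cylinder
with axis `ν`. If `z = w + x₀ + g x₀ • ν` is a boundary point close to `w` and `r` is small, the
point `z - (r / 2) • ν` lies at depth `r / 2` under the graph; since `g` drops by at most `L` per
unit of horizontal distance, the closed ball of radius `r / (4 (1 + L))` around it stays under the
graph, hence in `Z`, and inside `B(z, r)`. Compactness of `∂Z` makes these local constants uniform,
and scales between the uniform one and `diam Z` are reached by shrinking the constant.
-/

open scoped RealInnerProductSpace Topology
open Filter

section Corkscrews

variable {X : Type*} [PseudoMetricSpace X]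

def HasInteriorCorkscrew (Z : Set X) (c : ℝ) (z : X) (r : ℝ) : Prop :=
  ∃ zt ∈ Z, closedBall zt (c * r) ⊆ Z ∩ ball z r

def HasInteriorCorkscrews (Z : Set X) (c R : ℝ) (z : X) : Prop :=
  ∀ r ∈ Ioc 0 R, HasInteriorCorkscrew Z c z r

lemma HasInteriorCorkscrew.mono {Z : Set X} {c c' r r' : ℝ} {z : X}
    (h : HasInteriorCorkscrew Z c z r) (hc : c' * r' ≤ c * r) (hr : r ≤ r') :
    HasInteriorCorkscrew Z c' z r' :=
  let ⟨zt, hzt, hsub⟩ := h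
  ⟨zt, hzt, (closedBall_subset_closedBall hc).trans
    (hsub.trans (inter_subset_inter_right _ (ball_subset_ball hr)))⟩

lemma HasInteriorCorkscrews.rescale {Z : Set X} {c R D : ℝ} {z : X}
    (h : HasInteriorCorkscrews Z c R z) (hc : 0 ≤ c) (hR : 0 < R) (hRD : R ≤ D) :
    HasInteriorCorkscrews Z (c * R / D) D z := by
  rintro r ⟨hr, hrD⟩
  have hD : 0 < D := hR.trans_le hRD
  rcases le_total r R with hrR | hRr
  · refine (h r ⟨hr, hrR⟩).mono ?_ le_rfl
    calc c * R / D * r = c * r * (R / D) := by ring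
      _ ≤ c * r := mul_le_of_le_one_right (by positivity) ((div_le_one hD).2 hRD)
  · refine (h R ⟨hR, le_rfl⟩).mono ?_ hRr
    calc c * R / D * r = c * R * (r / D) := by ring
      _ ≤ c * R := mul_le_of_le_one_right (by positivity) ((div_le_one hD).2 hrD)

end Corkscrews

section

variable {E : Type*} [NormedAddCommGroup E] [InnerProductSpace ℝ E]

lemma norm_le_norm_add_of_inner_eq_zero {x y : E} (h : ⟪x, y⟫ = 0) : ‖x‖ ≤ ‖x + y‖ := by
  rw [mul_self_le_mul_self_iff (norm_nonneg _) (norm_nonneg _),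
    norm_add_sq_eq_norm_sq_add_norm_sq_real h]
  nlinarith [norm_nonneg y]

lemma norm_le_norm_add_of_inner_eq_zero' {x y : E} (h : ⟪x, y⟫ = 0) : ‖y‖ ≤ ‖x + y‖ := by
  rw [add_comm]
  exact norm_le_norm_add_of_inner_eq_zero (real_inner_comm x y ▸ h)

variable {ν : E}

lemma inner_smul_eq_zero_of_inner_eq_zero {x : E} (hx : ⟪x, ν⟫ = 0) (y : ℝ) :
    ⟪x, y • ν⟫ = 0 := by
  rw [real_inner_smul_right, hx, mul_zero]

lemma norm_le_norm_add_smul {x : E} (hx : ⟪x, ν⟫ = 0) (y : ℝ) : ‖x‖ ≤ ‖x + y • ν‖ :=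
  norm_le_norm_add_of_inner_eq_zero (inner_smul_eq_zero_of_inner_eq_zero hx y)

lemma abs_le_norm_add_smul (hν : ‖ν‖ = 1) {x : E} (hx : ⟪x, ν⟫ = 0) (y : ℝ) :
    |y| ≤ ‖x + y • ν‖ := by
  simpa [norm_smul, hν] using
    norm_le_norm_add_of_inner_eq_zero' (inner_smul_eq_zero_of_inner_eq_zero hx y)

lemma exists_inner_eq_zero_eq_add_smul (hν : ‖ν‖ = 1) (v : E) :
    ∃ x, ⟪x, ν⟫ = 0 ∧ v = x + ⟪v, ν⟫ • ν := by
  refine ⟨v - ⟪v, ν⟫ • ν, ?_, by abel⟩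
  rw [inner_sub_left, real_inner_smul_left, real_inner_self_eq_norm_sq, hν]
  ring

/-- A ball of radius `δ` centred at depth `s` under the graph of `g` stays under the graph as long
as `δ (1 + L) < s`. -/
lemma LipschitzWith.exists_lt_of_mem_closedBall {g : E → ℝ} {L : NNReal} (hg : LipschitzWith L g)
    (hν : ‖ν‖ = 1) {x₀ p : E} (hx₀ : ⟪x₀, ν⟫ = 0) {s δ : ℝ} (hδ : δ * (1 + L) < s)
    (hp : p ∈ closedBall (x₀ + (g x₀ - s) • ν) δ) :
    ∃ x y, ⟪x, ν⟫ = 0 ∧ ‖x - x₀‖ ≤ δ ∧ |y - (g x₀ - s)| ≤ δ ∧ y < g x ∧ p = x + y • ν := by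
  obtain ⟨u, hu, hdec⟩ := exists_inner_eq_zero_eq_add_smul hν (p - (x₀ + (g x₀ - s) • ν))
  set t := ⟪p - (x₀ + (g x₀ - s) • ν), ν⟫
  rw [mem_closedBall_iff_norm, hdec] at hp
  have hu_le : ‖u‖ ≤ δ := (norm_le_norm_add_smul hu t).trans hp
  have ht_le : |t| ≤ δ := (abs_le_norm_add_smul hν hu t).trans hp
  have hgx : g x₀ - L * δ ≤ g (x₀ + u) := by
    have := hg.dist_le_mul (x₀ + u) x₀
    rw [Real.dist_eq, dist_eq_norm, add_sub_cancel_left] at this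
    nlinarith [abs_le.1 this, L.coe_nonneg]
  refine ⟨x₀ + u, g x₀ - s + t, by rw [inner_add_left, hx₀, hu, add_zero],
    by rwa [add_sub_cancel_left], by rwa [add_sub_cancel_left], ?_, ?_⟩
  · linarith [(abs_le.1 ht_le).2]
  · rw [sub_eq_iff_eq_add.1 hdec, add_smul]
    abel

lemma LipschitzWith.hasInteriorCorkscrew_of_subgraph_subset {Z : Set E} {w x₀ : E}
    {g : E → ℝ} {L : NNReal} {ρ h c r : ℝ} (hg : LipschitzWith L g) (hν : ‖ν‖ = 1)
    (hZ : ∀ x y, ⟪x, ν⟫ = 0 → ‖x‖ < ρ → -h < y → y < g x → w + x + y • ν ∈ Z)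
    (hx₀ : ⟪x₀, ν⟫ = 0) (hx₀ρ : ‖x₀‖ + r ≤ ρ) (hgx₀ : -h ≤ g x₀ - r)
    (hc : 0 ≤ c) (hcL : c * (1 + L) ≤ 1 / 4) (hr : 0 < r) :
    HasInteriorCorkscrew Z c (w + x₀ + g x₀ • ν) r := by
  have hcr : c * r ≤ r / 4 := by nlinarith [L.coe_nonneg]
  have hsub : closedBall (w + x₀ + (g x₀ - r / 2) • ν) (c * r) ⊆
      Z ∩ ball (w + x₀ + g x₀ • ν) r := by
    intro p hp
    have hp' : p - w ∈ closedBall (x₀ + (g x₀ - r / 2) • ν) (c * r) := by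
      rwa [mem_closedBall_iff_norm, sub_sub, ← add_assoc, ← mem_closedBall_iff_norm]
    obtain ⟨x, y, hx, hxx₀, hy, hyg, hpxy⟩ :=
      hg.exists_lt_of_mem_closedBall hν hx₀ (by nlinarith) hp'
    have hpZ : p ∈ Z := by
      rw [← add_sub_cancel w p, hpxy, ← add_assoc]
      refine hZ x y hx ?_ ?_ hyg
      · linarith [norm_le_norm_add_norm_sub' x x₀]
      · linarith [(abs_le.1 hy).1]
    have hzt : dist (w + x₀ + (g x₀ - r / 2) • ν) (w + x₀ + g x₀ • ν) = r / 2 := by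
      rw [dist_add_left, dist_eq_norm, ← sub_smul, norm_smul, hν, mul_one, sub_sub_cancel_left,
        norm_neg, Real.norm_of_nonneg (by positivity)]
    refine ⟨hpZ, ?_⟩
    calc dist p (w + x₀ + g x₀ • ν)
        ≤ dist p (w + x₀ + (g x₀ - r / 2) • ν) + r / 2 :=
          (dist_triangle _ _ _).trans_eq (by rw [hzt])
      _ < r := by linarith [mem_closedBall.1 hp]
  exact ⟨_, (hsub (mem_closedBall_self (by positivity))).1, hsub⟩

end

lemma IsCompact.eventually_forall_mem_of_forall_eventually_prod {X Y : Type*}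
    [TopologicalSpace Y] {K : Set Y} (hK : IsCompact K) {l : Filter X} {P : X → Y → Prop}
    (hP : ∀ y ∈ K, ∀ᶠ p in l ×ˢ 𝓝 y, p.2 ∈ K → P p.1 p.2) : ∀ᶠ x in l, ∀ y ∈ K, P x y := by
  have hPK : ∀ᶠ p in l ×ˢ 𝓝ˢ K, p.2 ∈ K → P p.1 p.2 := hK.mem_prod_nhdsSet_of_forall hP
  exact hPK.curry.mono fun _ h y hy ↦ h.self_of_nhdsSet y hy hy

theorem IsLipschitzSet.eventually_hasInteriorCorkscrews {n : ℕ}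
    {Z : Set (EuclideanSpace ℝ (Fin n))} (hZ : IsLipschitzSet Z) {w : EuclideanSpace ℝ (Fin n)}
    (hw : w ∈ frontier Z) :
    ∀ᶠ p in 𝓝[>] (0 : ℝ) ×ˢ 𝓝 w, p.2 ∈ frontier Z → HasInteriorCorkscrews Z p.1 p.1 p.2 := by
  obtain ⟨ν, ρ, h, L, g, hν, hρ, hh, hg, -, hZC, hFC⟩ := hZ w hw
  obtain ⟨R, hR, hRρ, hRh⟩ : ∃ R > 0, 2 * R ≤ ρ ∧ 2 * R ≤ h :=
    ⟨min ρ h / 2, by positivity, by linarith [min_le_left ρ h], by linarith [min_le_right ρ h]⟩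
  obtain ⟨ε, hε, hεL, hεR⟩ : ∃ ε : ℝ, 0 < ε ∧ ε * (1 + L) ≤ 1 / 4 ∧ ε ≤ R := by
    refine ⟨min (4 * (1 + (L : ℝ)))⁻¹ R, by positivity, ?_, min_le_right _ _⟩
    calc min (4 * (1 + (L : ℝ)))⁻¹ R * (1 + L) ≤ (4 * (1 + (L : ℝ)))⁻¹ * (1 + L) := by
          gcongr; exact min_le_left _ _
      _ = 1 / 4 := by field_simp
  filter_upwards [prod_mem_prod (Ioc_mem_nhdsGT hε) (ball_mem_nhds w hε)]
  rintro ⟨c, z⟩ ⟨⟨hc, hcε⟩, hz⟩ hzF r ⟨hr, hrc⟩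
  dsimp only at hc hcε hz hzF hrc ⊢
  obtain ⟨x₀, hx₀, hx₀R, hgx₀R, rfl⟩ :
      ∃ x₀, ⟪x₀, ν⟫ = 0 ∧ ‖x₀‖ < R ∧ |g x₀| < R ∧ z = w + x₀ + g x₀ • ν := by
    have hzw : ‖z - w‖ < R := (mem_ball_iff_norm.1 hz).trans_le hεR
    have hcoord : ∀ x y, ⟪x, ν⟫ = 0 → z - w = x + y • ν → ‖x‖ < R ∧ |y| < R :=
      fun x y hx hxy ↦ ⟨(norm_le_norm_add_smul hx y).trans_lt (hxy ▸ hzw),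
        (abs_le_norm_add_smul hν hx y).trans_lt (hxy ▸ hzw)⟩
    obtain ⟨x, hx, hdec⟩ := exists_inner_eq_zero_eq_add_smul hν (z - w)
    obtain ⟨hxR, hyR⟩ := hcoord x _ hx hdec
    have hzC : z ∈ frontier Z ∩ {p | ∃ (x : EuclideanSpace ℝ (Fin n)) (y : ℝ), ⟪x, ν⟫ = 0 ∧
        ‖x‖ < ρ ∧ -h < y ∧ y < h ∧ p = w + x + y • ν} :=
      ⟨hzF, x, ⟪z - w, ν⟫, hx, by linarith, by linarith [(abs_lt.1 hyR).1],
        by linarith [(abs_lt.1 hyR).2], by rw [add_assoc, ← hdec]; abel⟩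
    rw [hFC] at hzC
    obtain ⟨x₀, _, hx₀, -, -, -, rfl, hz⟩ := hzC
    obtain ⟨hx₀R, hgx₀R⟩ := hcoord x₀ _ hx₀ (by rw [hz]; abel)
    exact ⟨x₀, hx₀, hx₀R, hgx₀R, hz⟩
  have hrR : r ≤ R := hrc.trans (hcε.trans hεR)
  refine hg.hasInteriorCorkscrew_of_subgraph_subset hν
    (fun x y hx hxρ hyh hyg ↦ ((Set.ext_iff.1 hZC _).2 ⟨x, y, hx, hxρ, hyh, hyg, rfl⟩).1)
    hx₀ (by linarith) (by linarith [(abs_lt.1 hgx₀R).1]) hc.le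
    (le_trans (by gcongr) hεL) hr

theorem lipschitz_set_interior_corkscrew_general {n : ℕ}
    (Z : Set (EuclideanSpace ℝ (Fin n))) (hZbd : Bornology.IsBounded Z)
    (hZlip : IsLipschitzSet Z) :
    ∃ c > (0 : ℝ), ∀ z ∈ frontier Z, ∀ r : ℝ, 0 < r → r < Metric.diam Z →
      ∃ zt ∈ Z, Metric.closedBall zt (c * r) ⊆ Z ∩ Metric.ball z r := by
  have hK : IsCompact (frontier Z) :=
    hZbd.isCompact_closure.of_isClosed_subset isClosed_frontier frontier_subset_closure
  have hunif : ∀ᶠ ε in 𝓝[>] (0 : ℝ), ∀ z ∈ frontier Z, HasInteriorCorkscrews Z ε ε z :=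
    hK.eventually_forall_mem_of_forall_eventually_prod fun w hw ↦
      hZlip.eventually_hasInteriorCorkscrews hw
  obtain ⟨ε, hcork, hε⟩ := (hunif.and self_mem_nhdsWithin).exists
  refine ⟨ε * ε / max (diam Z) ε, by positivity, fun z hz r hr hrZ ↦ ?_⟩
  exact (hcork z hz).rescale hε.le hε (le_max_right _ _) r ⟨hr, hrZ.le.trans (le_max_left _ _)⟩

/-- A bounded, open, nonempty Lipschitz set in `ℝⁿ` (`n ≥ 2`) satisfies the interior
corkscrew condition. -/
theorem lipschitz_set_interior_corkscrew {n : ℕ} (hn : 2 ≤ n)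
    (Z : Set (EuclideanSpace ℝ (Fin n))) (hZbd : Bornology.IsBounded Z)
    (hZop : IsOpen Z) (hZne : Z.Nonempty) (hZlip : IsLipschitzSet Z) :
    ∃ c > (0 : ℝ), ∀ z ∈ frontier Z, ∀ r : ℝ, 0 < r → r < Metric.diam Z →
      ∃ zt ∈ Z, Metric.closedBall zt (c * r) ⊆ Z ∩ Metric.ball z r :=
  lipschitz_set_interior_corkscrew_general Z hZbd hZlip
end
end

section
/- Let n ≥ 2 and let Z ⊆ ℝⁿ be a bounded, open, nonempty set satisfying the following uniform interior cone condition: there exist constants H > 0 with H ≤ diam(Z) and L > 0 such that for every z ∈ ∂Z there is a unit vector ν_z ∈ ℝⁿ with K(z) := {z + w : 0 < ⟨w, −ν_z⟩ ≤ H and L·‖w − ⟨w,−ν_z⟩·(−ν_z)‖ ≤ ⟨w, −ν_z⟩} ⊆ Z. Set F := H / (4·√(1+L²)·diam(Z)). Then for every z ∈ ∂Z and every 0 < r < diam(Z), the point z̃ := z − (1/2)·min(H, r)·ν_z satisfies B̄(z̃, F·r) ⊆ Z ∩ B(z, r), where B̄ denotes a closed ball and B an open ball. In particular Z satisfies the interior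 corkscrew condition with constant F. -/
/-!
The centre `z̃ = z + s t` (with `t = -ν_z` and `s = min(H, r) / 2`) lies on the axis of the
cone at `z`. A ball of radius `ε` around `z + s t` stays inside the cone as soon as
`(L + 1) ε ≤ s` and `s + ε ≤ H`: the axial component of its points is `s ± ε`, and the
orthogonal component, being a projection, is at most `ε`. Since `L + 1 ≤ 2√(1+L²)` and
`H r / diam Z ≤ min(H, r)`, the radius `F r` satisfies these constraints, and also `s + F r < r`.
-/

open Metric Set

section Cone

variable {E : Type*} [NormedAddCommGroup E] [InnerProductSpace ℝ E]

/-- The cone `K(z)` of the paper, with vertex `z`, unit axis direction `t = -ν_z`, height `H`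
and aperture constant `L`. -/
def circularCone (z t : E) (H L : ℝ) : Set E :=
  {p | ∃ w : E, p = z + w ∧ 0 < (inner ℝ w t : ℝ) ∧ (inner ℝ w t : ℝ) ≤ H ∧
    L * ‖w - (inner ℝ w t : ℝ) • t‖ ≤ (inner ℝ w t : ℝ)}

theorem norm_sub_inner_smul_le_norm {t : E} (ht : ‖t‖ = 1) (u : E) :
    ‖u - (inner ℝ u t : ℝ) • t‖ ≤ ‖u‖ := by
  have hsq : ‖u - (inner ℝ u t : ℝ) • t‖ ^ 2 = ‖u‖ ^ 2 - (inner ℝ u t : ℝ) ^ 2 := by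
    rw [norm_sub_sq_real, real_inner_smul_right, norm_smul, ht, real_inner_comm,
      Real.norm_eq_abs, mul_one, sq_abs]
    ring
  exact le_of_pow_le_pow_left₀ two_ne_zero (norm_nonneg u) (by nlinarith)

theorem closedBall_subset_circularCone {z t : E} (ht : ‖t‖ = 1) {H L s ε : ℝ} (hL : 0 ≤ L)
    (hεs : ε < s) (hsH : s + ε ≤ H) (hLε : (L + 1) * ε ≤ s) :
    closedBall (z + s • t) ε ⊆ circularCone z t H L := by
  intro p hp
  set u := p - (z + s • t)
  have hu : ‖u‖ ≤ ε := by rwa [mem_closedBall, dist_eq_norm] at hp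
  set c : ℝ := inner ℝ u t
  have hc : |c| ≤ ε := (abs_real_inner_le_norm u t).trans (by rwa [ht, mul_one])
  have hw : p - z = u + s • t := by simp only [u]; abel
  have haxial : (inner ℝ (p - z) t : ℝ) = s + c := by
    rw [hw, inner_add_left, real_inner_smul_left, real_inner_self_eq_norm_sq, ht]
    ring
  have horth : ‖p - z - (s + c) • t‖ ≤ ε := by
    rw [hw, add_smul, add_comm u, add_sub_add_left_eq_sub]
    exact (norm_sub_inner_smul_le_norm ht u).trans hu
  obtain ⟨hc_lower, hc_upper⟩ := abs_le.mp hc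
  refine ⟨p - z, (add_sub_cancel z p).symm, ?_, ?_, ?_⟩ <;> rw [haxial]
  · linarith
  · linarith
  · nlinarith [mul_le_mul_of_nonneg_left horth hL]

end Cone

theorem one_add_le_two_mul_sqrt_one_add_sq (L : ℝ) : L + 1 ≤ 2 * √(1 + L ^ 2) := by
  have h : (L + 1) / 2 ≤ √(1 + L ^ 2) :=
    Real.le_sqrt_of_sq_le (by nlinarith [sq_nonneg (L - 1)])
  linarith

theorem mul_div_le_min {a b D : ℝ} (ha : 0 ≤ a) (hb : 0 ≤ b) (haD : a ≤ D) (hbD : b ≤ D) :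
    a * b / D ≤ min a b :=
  le_min (div_le_of_le_mul₀ (ha.trans haD) ha (mul_le_mul_of_nonneg_left hbD ha))
    (div_le_of_le_mul₀ (ha.trans haD) hb
      ((mul_comm a b).trans_le (mul_le_mul_of_nonneg_left haD hb)))

theorem cone_condition_implies_corkscrew_general {n : ℕ}
    (Z : Set (EuclideanSpace ℝ (Fin n)))
    (H L : ℝ) (hH : 0 < H) (hHdiam : H ≤ Metric.diam Z) (hL : 0 < L)
    (ν : EuclideanSpace ℝ (Fin n) → EuclideanSpace ℝ (Fin n))
    (hν : ∀ z ∈ frontier Z, ‖ν z‖ = 1)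
    (hcone : ∀ z ∈ frontier Z,
      {p | ∃ w : EuclideanSpace ℝ (Fin n), p = z + w ∧
          0 < (inner ℝ w (-(ν z)) : ℝ) ∧ (inner ℝ w (-(ν z)) : ℝ) ≤ H ∧
          L * ‖w - (inner ℝ w (-(ν z)) : ℝ) • (-(ν z))‖ ≤ (inner ℝ w (-(ν z)) : ℝ)} ⊆ Z) :
    ∀ z ∈ frontier Z, ∀ r : ℝ, 0 < r → r < Metric.diam Z →
      Metric.closedBall (z - ((1 / 2) * min H r) • ν z)
          (H / (4 * Real.sqrt (1 + L ^ 2) * Metric.diam Z) * r)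
        ⊆ Z ∩ Metric.ball z r := by
  intro z hz r hr hrD
  set s := (1 / 2) * min H r with hs_def
  set ε := H / (4 * √(1 + L ^ 2) * diam Z) * r
  have hs : 0 < s := by positivity
  have hS : 1 ≤ √(1 + L ^ 2) := Real.one_le_sqrt.mpr (by nlinarith)
  have hε : 0 ≤ ε := by positivity
  have h2Sε : 2 * √(1 + L ^ 2) * ε ≤ s := by
    have hD : 0 < diam Z := hr.trans hrD
    have heq : 2 * √(1 + L ^ 2) * ε = H * r / diam Z / 2 := by
      simp only [ε]; field_simp; ring
    linarith [hs_def, mul_div_le_min hH.le hr.le hHdiam hrD.le]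
  have hLε : (L + 1) * ε ≤ s :=
    (mul_le_mul_of_nonneg_right (one_add_le_two_mul_sqrt_one_add_sq L) hε).trans h2Sε
  have h2ε : 2 * ε ≤ s := by nlinarith
  have ht : ‖-ν z‖ = 1 := by rw [norm_neg, hν z hz]
  rw [sub_eq_add_neg, ← smul_neg]
  refine subset_inter ((closedBall_subset_circularCone ht hL.le (by linarith) ?_ hLε).trans
    (hcone z hz)) (closedBall_subset_ball' ?_)
  · linarith [hs_def, min_le_left H r]
  · rw [dist_self_add_left, norm_smul, ht, mul_one, Real.norm_of_nonneg hs.le]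
    linarith [hs_def, min_le_right H r]

/-- A bounded, open, nonempty set in `ℝⁿ` (`n ≥ 2`) satisfying a uniform interior cone
condition (cones of height `H` and aperture constant `L` at every boundary point) satisfies
the interior corkscrew condition with the explicit constant
`F = H / (4·√(1+L²)·diam Z)`, witnessed by `zt = z − (1/2)·min(H,r)·ν_z`. -/
theorem cone_condition_implies_corkscrew {n : ℕ} (hn : 2 ≤ n)
    (Z : Set (EuclideanSpace ℝ (Fin n))) (hZbd : Bornology.IsBounded Z)
    (hZop : IsOpen Z) (hZne : Z.Nonempty)
    (H L : ℝ) (hH : 0 < H) (hHdiam : H ≤ Metric.diam Z) (hL : 0 < L)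
    (ν : EuclideanSpace ℝ (Fin n) → EuclideanSpace ℝ (Fin n))
    (hν : ∀ z ∈ frontier Z, ‖ν z‖ = 1)
    (hcone : ∀ z ∈ frontier Z,
      {p | ∃ w : EuclideanSpace ℝ (Fin n), p = z + w ∧
          0 < (inner ℝ w (-(ν z)) : ℝ) ∧ (inner ℝ w (-(ν z)) : ℝ) ≤ H ∧
          L * ‖w - (inner ℝ w (-(ν z)) : ℝ) • (-(ν z))‖ ≤ (inner ℝ w (-(ν z)) : ℝ)} ⊆ Z) :
    ∀ z ∈ frontier Z, ∀ r : ℝ, 0 < r → r < Metric.diam Z →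
      Metric.closedBall (z - ((1 / 2) * min H r) • ν z)
          (H / (4 * Real.sqrt (1 + L ^ 2) * Metric.diam Z) * r)
        ⊆ Z ∩ Metric.ball z r :=
  cone_condition_implies_corkscrew_general Z H L hH hHdiam hL ν hν hcone
end

section
/- Let (X, d) be a metric space, E ⊆ X a nonempty subset, p ∈ X, and let 0 < α < α̃. Set δ := (α̃ − α)/((1+α)(2+α̃)). Suppose x ∈ X satisfies d(p, x) ≤ (1+α)·dist(x, E). Then every point x̃ ∈ X with d(x̃, x) ≤ δ·d(p, x) satisfies d(p, x̃) ≤ (1+α̃)·dist(x̃, E). -/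
open Metric

/-
Write `r = d(p, x)`. Moving from `x` to `x̃` changes `d(p, ·)` and `dist(·, E)` by at most
`δ r` each, so `d(p, x̃) ≤ (1 + δ) r` while `dist(x̃, E) ≥ (1/(1+α) - δ) r`. The value of `δ` is
exactly the one for which `(1 + α̃)(1/(1+α) - δ) = 1 + δ`.
-/

namespace Metric

variable {X : Type*} [PseudoMetricSpace X]

lemma dist_le_one_add_mul_of_dist_le {p x y : X} {δ : ℝ} (h : dist y x ≤ δ * dist p x) :
    dist p y ≤ (1 + δ) * dist p x := by
  linarith [dist_triangle_right p y x]

lemma sub_mul_le_infDist_of_dist_le {E : Set X} {p x y : X} {c δ : ℝ} (hc : 0 < c)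
    (hx : dist p x ≤ c * infDist x E) (h : dist y x ≤ δ * dist p x) :
    (c⁻¹ - δ) * dist p x ≤ infDist y E := by
  have hxE : c⁻¹ * dist p x ≤ infDist x E := by
    rwa [inv_mul_le_iff₀ hc]
  linarith [infDist_le_infDist_add_dist (x := x) (y := y) (s := E), dist_comm x y]

end Metric

lemma one_add_mul_inv_sub_eq {α αt : ℝ} (hα : 1 + α ≠ 0) (hαt : 2 + αt ≠ 0) :
    (1 + αt) * ((1 + α)⁻¹ - (αt - α) / ((1 + α) * (2 + αt))) =
      1 + (αt - α) / ((1 + α) * (2 + αt)) := by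
  field_simp
  ring

theorem cone_ball_in_enlarged_cone_general {X : Type*} [MetricSpace X]
    (E : Set X) (p : X) (α αt : ℝ) (hα : 0 < α) (hαt : α < αt)
    (x : X) (hx : dist p x ≤ (1 + α) * Metric.infDist x E)
    (xt : X) (hxt : dist xt x ≤ ((αt - α) / ((1 + α) * (2 + αt))) * dist p x) :
    dist p xt ≤ (1 + αt) * Metric.infDist xt E := by
  set δ := (αt - α) / ((1 + α) * (2 + αt))
  have hinfDist := sub_mul_le_infDist_of_dist_le (by linarith) hx hxt
  calc dist p xt ≤ (1 + δ) * dist p x := dist_le_one_add_mul_of_dist_le hxt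
    _ = (1 + αt) * (((1 + α)⁻¹ - δ) * dist p x) := by
      rw [← mul_assoc, one_add_mul_inv_sub_eq (by linarith) (by linarith)]
    _ ≤ (1 + αt) * infDist xt E := by gcongr; linarith

/-- A metric ball of radius `δ·d(p,x)`, with `δ = (α̃−α)/((1+α)(2+α̃))`, around any point `x`
of the nontangential cone with vertex `p` and aperture `α` relative to the set `E` is
contained in the enlarged cone with aperture `α̃`. -/
theorem cone_ball_in_enlarged_cone {X : Type*} [MetricSpace X]
    (E : Set X) (hE : E.Nonempty) (p : X) (α αt : ℝ) (hα : 0 < α) (hαt : α < αt)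
    (x : X) (hx : dist p x ≤ (1 + α) * Metric.infDist x E)
    (xt : X) (hxt : dist xt x ≤ ((αt - α) / ((1 + α) * (2 + αt))) * dist p x) :
    dist p xt ≤ (1 + αt) * Metric.infDist xt E :=
  cone_ball_in_enlarged_cone_general E p α αt hα hαt x hx xt hxt
end

section
/- Let n ≥ 2 and let Ω ⊆ ℝⁿ be a bounded, open, nonempty set with Ω ≠ ℝⁿ, and let E := ∂Ω be its frontier. Let σ be a Borel measure on ℝⁿ and C₀ > 0 a constant such that σ(E ∩ B̄(y, t)) ≤ C₀·t^{n−1} for every y ∈ E and every t > 0. Fix α̃ > 0, p ∈ E and r > 0, and for q ∈ E set Γ̃^r(q) := {x ∈ Ω : ‖x − q‖ ≤ (1 + α̃)·dist(x, E)} ∩ B(q, r). Then for every Borel measurable f : ℝⁿ → [0, ∞], ∫_{E ∩ B(p,r)} ( ∫_{Γ̃^r(q)} f(x)·‖x − q‖^{1−n} dx ) dσ(q) ≤ C₀·(2 + α̃)^{n−1} · ∫_{Ω ∩ B(p, 2r)} f(x) dx, where dx denotes Lebesgue measure on ℝⁿ. -/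
open Metric Set MeasureTheory ENNReal

/-!
Swap the two integrals (Tonelli). For a fixed interior point `x`, with `d = dist(x, ∂Ω)`,
the boundary points `q` whose cone contains `x` satisfy `d ≤ ‖x - q‖ ≤ (1 + α̃) d`, so they
lie in the ball of radius `(2 + α̃) d` about a nearest boundary point of `x`. Upper Ahlfors
regularity bounds their `σ`-measure by `C₀ ((2 + α̃) d)^{n-1}`, while the kernel
`‖x - q‖^{1-n}` is at most `d^{1-n}` there: the powers of `d` cancel and leave
`C₀ (2 + α̃)^{n-1}`, uniformly in `x`.
-/

section Tonelli

variable {X Y : Type*} [MeasurableSpace X] [MeasurableSpace Y] {μ : Measure X} {ν : Measure Y}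
  [SFinite μ] [SFinite ν]

theorem lintegral_setLIntegral_le_of_forall_setLIntegral_le {s : Y → Set X}
    (hs : MeasurableSet {z : Y × X | z.2 ∈ s z.1}) {g : Y → X → ℝ≥0∞}
    (hg : Measurable (Function.uncurry g)) {h : X → ℝ≥0∞}
    (hgh : ∀ x, ∫⁻ y in {y | x ∈ s y}, g y x ∂ν ≤ h x) :
    ∫⁻ y, ∫⁻ x in s y, g y x ∂μ ∂ν ≤ ∫⁻ x, h x ∂μ := by
  have hF : Measurable (Function.uncurry fun y x => (s y).indicator (g y) x) :=
    hg.indicator hs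
  calc ∫⁻ y, ∫⁻ x in s y, g y x ∂μ ∂ν
      = ∫⁻ y, ∫⁻ x, (s y).indicator (g y) x ∂μ ∂ν :=
        lintegral_congr fun y => (lintegral_indicator (measurable_prodMk_left hs) _).symm
    _ = ∫⁻ x, ∫⁻ y, {y | x ∈ s y}.indicator (fun y => g y x) y ∂ν ∂μ :=
        lintegral_lintegral_swap hF.aemeasurable
    _ = ∫⁻ x, ∫⁻ y in {y | x ∈ s y}, g y x ∂ν ∂μ :=
        lintegral_congr fun x => lintegral_indicator (measurable_prodMk_right hs) _
    _ ≤ ∫⁻ x, h x ∂μ := lintegral_mono hgh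

end Tonelli

section UpperRegular

variable {X : Type*} [PseudoMetricSpace X] [ProperSpace X] [MeasurableSpace X]
  {E : Set X} {σ : Measure X} {C₀ s : ℝ}

theorem measure_inter_closedBall_le_of_upperRegular (hE : IsClosed E)
    (hσ : ∀ y ∈ E, ∀ t : ℝ, 0 < t →
      σ (E ∩ closedBall y t) ≤ ENNReal.ofReal (C₀ * t ^ s))
    (x : X) {R : ℝ} (hR : 0 < R + infDist x E) :
    σ (E ∩ closedBall x R) ≤ ENNReal.ofReal (C₀ * (R + infDist x E) ^ s) := by
  rcases E.eq_empty_or_nonempty with rfl | hne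
  · simp
  obtain ⟨y, hyE, hy⟩ := hE.exists_infDist_eq_dist hne x
  have hsub : E ∩ closedBall x R ⊆ E ∩ closedBall y (R + infDist x E) := fun q hq =>
    ⟨hq.1, calc dist q y ≤ dist q x + dist x y := dist_triangle _ _ _
      _ ≤ R + infDist x E := by rw [← hy]; linarith [mem_closedBall.1 hq.2]⟩
  exact (measure_mono hsub).trans (hσ y hyE _ hR)

theorem setLIntegral_inter_closedBall_rpow_neg_le (hE : IsClosed E) (hs : 0 ≤ s)
    (hσ : ∀ y ∈ E, ∀ t : ℝ, 0 < t →
      σ (E ∩ closedBall y t) ≤ ENNReal.ofReal (C₀ * t ^ s))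
    {x : X} (hx : x ∉ E) {a : ℝ} (ha : 0 ≤ a) :
    ∫⁻ q in E ∩ closedBall x (a * infDist x E), ENNReal.ofReal (dist x q ^ (-s)) ∂σ
      ≤ ENNReal.ofReal (C₀ * (1 + a) ^ s) := by
  rcases E.eq_empty_or_nonempty with rfl | hne
  · simp
  set d := infDist x E
  have hd : 0 < d := (hE.notMem_iff_infDist_pos hne).1 hx
  calc ∫⁻ q in E ∩ closedBall x (a * d), ENNReal.ofReal (dist x q ^ (-s)) ∂σ
      ≤ ∫⁻ q in E ∩ closedBall x (a * d), ENNReal.ofReal (d ^ (-s)) ∂σ :=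
        setLIntegral_mono measurable_const fun q hq => ENNReal.ofReal_le_ofReal <|
          Real.rpow_le_rpow_of_nonpos hd (infDist_le_dist_of_mem hq.1) (neg_nonpos.2 hs)
    _ = ENNReal.ofReal (d ^ (-s)) * σ (E ∩ closedBall x (a * d)) := setLIntegral_const _ _
    _ ≤ ENNReal.ofReal (d ^ (-s)) * ENNReal.ofReal (C₀ * (a * d + d) ^ s) := by
        gcongr
        exact measure_inter_closedBall_le_of_upperRegular hE hσ x (by positivity)
    _ = ENNReal.ofReal (C₀ * (1 + a) ^ s) := by
        rw [← ENNReal.ofReal_mul (by positivity), show a * d + d = (1 + a) * d by ring,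
          Real.mul_rpow (by positivity) hd.le, Real.rpow_neg hd.le]
        field_simp

end UpperRegular

section Cone

variable {X : Type*} [PseudoMetricSpace X]

/-- The cone `Γ̃^r(q)`, of aperture `α` and height `r`. -/
def nontangentialCone (Ω : Set X) (α r : ℝ) (q : X) : Set X :=
  {x ∈ Ω | dist x q ≤ (1 + α) * infDist x (frontier Ω)} ∩ ball q r

theorem measurableSet_setOf_mem_nontangentialCone [MeasurableSpace X]
    [OpensMeasurableSpace X] [SecondCountableTopology X] {Ω : Set X} (hΩ : MeasurableSet Ω)
    (α r : ℝ) :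
    MeasurableSet {z : X × X | z.2 ∈ nontangentialCone Ω α r z.1} := by
  have hle : MeasurableSet {z : X × X | dist z.2 z.1 ≤ (1 + α) * infDist z.2 (frontier Ω)} :=
    measurableSet_le (by fun_prop) (by fun_prop)
  have hlt : MeasurableSet {z : X × X | dist z.2 z.1 < r} :=
    measurableSet_lt (by fun_prop) measurable_const
  exact ((measurable_snd hΩ).inter hle).inter hlt

theorem mem_inter_ball_two_mul_of_mem_nontangentialCone {Ω : Set X} {α r : ℝ} {p q x : X}
    (hq : q ∈ ball p r) (hx : x ∈ nontangentialCone Ω α r q) : x ∈ Ω ∩ ball p (2 * r) :=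
  ⟨hx.1.1, calc dist x p ≤ dist x q + dist q p := dist_triangle _ _ _
    _ < 2 * r := by linarith [mem_ball.1 hx.2, mem_ball.1 hq]⟩

variable [ProperSpace X] [MeasurableSpace X] [OpensMeasurableSpace X] {σ : Measure X} {C₀ s : ℝ}

theorem setLIntegral_setOf_mem_nontangentialCone_le {Ω : Set X} (hΩ : IsOpen Ω) (hs : 0 ≤ s)
    (hσ : ∀ y ∈ frontier Ω, ∀ t : ℝ, 0 < t →
      σ (frontier Ω ∩ closedBall y t) ≤ ENNReal.ofReal (C₀ * t ^ s))
    {α : ℝ} (hα : 0 ≤ 1 + α) (p : X) (r : ℝ) (x : X) :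
    ∫⁻ q in {q | x ∈ nontangentialCone Ω α r q}, ENNReal.ofReal (dist x q ^ (-s))
        ∂σ.restrict (frontier Ω ∩ ball p r)
      ≤ (Ω ∩ ball p (2 * r)).indicator (fun _ => ENNReal.ofReal (C₀ * (2 + α) ^ s)) x := by
  rw [Measure.restrict_restrict' (isClosed_frontier.measurableSet.inter measurableSet_ball)]
  by_cases hx : x ∈ Ω ∩ ball p (2 * r)
  · have hxE : x ∉ frontier Ω := fun h => hΩ.inter_frontier_eq.subset ⟨hx.1, h⟩
    have hsub : {q | x ∈ nontangentialCone Ω α r q} ∩ (frontier Ω ∩ ball p r)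
        ⊆ frontier Ω ∩ closedBall x ((1 + α) * infDist x (frontier Ω)) :=
      fun q hq => ⟨hq.2.1, mem_closedBall'.2 hq.1.1.2⟩
    rw [indicator_of_mem hx]
    calc _ ≤ _ := lintegral_mono_set hsub
      _ ≤ _ := setLIntegral_inter_closedBall_rpow_neg_le isClosed_frontier hs hσ hxE hα
      _ = _ := by ring_nf
  · have hempty : {q | x ∈ nontangentialCone Ω α r q} ∩ (frontier Ω ∩ ball p r) = ∅ :=
      eq_empty_of_forall_notMem fun q hq =>
        hx (mem_inter_ball_two_mul_of_mem_nontangentialCone hq.2.2 hq.1)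
    simp [hempty]

end Cone

theorem fubini_shadow_estimate_general {n : ℕ} (hn : 2 ≤ n)
    (Ω : Set (EuclideanSpace ℝ (Fin n)))
    (hop : IsOpen Ω)
    (σ : Measure (EuclideanSpace ℝ (Fin n))) (C₀ : ℝ)
    (hσ : ∀ y ∈ frontier Ω, ∀ t : ℝ, 0 < t →
      σ (frontier Ω ∩ Metric.closedBall y t) ≤ ENNReal.ofReal (C₀ * t ^ (n - 1)))
    (αt : ℝ) (hαt : 0 < αt)
    (p : EuclideanSpace ℝ (Fin n)) (hp : p ∈ frontier Ω) (r : ℝ) (hr : 0 < r)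
    (f : EuclideanSpace ℝ (Fin n) → ℝ≥0∞) (hf : Measurable f) :
    (∫⁻ q in frontier Ω ∩ Metric.ball p r,
        (∫⁻ x in ({x ∈ Ω | ‖x - q‖ ≤ (1 + αt) * Metric.infDist x (frontier Ω)} ∩
            Metric.ball q r),
          f x * ENNReal.ofReal (‖x - q‖ ^ ((1 : ℝ) - n))) ∂σ)
      ≤ ENNReal.ofReal (C₀ * (2 + αt) ^ (n - 1)) *
          ∫⁻ x in Ω ∩ Metric.ball p (2 * r), f x := by
  have hpow : ∀ t : ℝ, t ^ (n - 1) = t ^ ((n : ℝ) - 1) := fun t => by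
    rw [← Real.rpow_natCast, Nat.cast_sub (by omega), Nat.cast_one]
  have hs : 0 ≤ (n : ℝ) - 1 := by
    have : (2 : ℝ) ≤ n := by exact_mod_cast hn
    linarith
  have hσ' : ∀ y ∈ frontier Ω, ∀ t : ℝ, 0 < t →
      σ (frontier Ω ∩ closedBall y t) ≤ ENNReal.ofReal (C₀ * t ^ ((n : ℝ) - 1)) := by
    simpa only [hpow] using hσ
  have : IsFiniteMeasure (σ.restrict (frontier Ω ∩ ball p r)) :=
    isFiniteMeasure_restrict.2 <| ne_top_of_le_ne_top ofReal_ne_top <|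
      (measure_mono (inter_subset_inter_right _ ball_subset_closedBall)).trans (hσ p hp r hr)
  simp_rw [← dist_eq_norm, show (1 : ℝ) - n = -((n : ℝ) - 1) by ring, hpow]
  change ∫⁻ q in _, ∫⁻ x in nontangentialCone Ω αt r q, _ ∂_ ∂σ ≤ _
  calc _ ≤ ∫⁻ x, f x * (Ω ∩ ball p (2 * r)).indicator
          (fun _ => ENNReal.ofReal (C₀ * (2 + αt) ^ ((n : ℝ) - 1))) x :=
        lintegral_setLIntegral_le_of_forall_setLIntegral_le
          (measurableSet_setOf_mem_nontangentialCone hop.measurableSet αt r) (by fun_prop)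
          fun x => by
            rw [lintegral_const_mul _ (by fun_prop)]
            gcongr
            exact setLIntegral_setOf_mem_nontangentialCone_le hop hs hσ' (by linarith) p r x
    _ = _ := by
        simp_rw [← indicator_mul_right,
          lintegral_indicator (hop.measurableSet.inter measurableSet_ball),
          lintegral_mul_const _ hf, mul_comm]

/-- The core Fubini/shadow estimate for the Quantitative Fatou Property: integrating
`f(x)·‖x−q‖^{1−n}` over truncated nontangential cones `Γ̃^r(q)` against an upper
`(n−1)`-Ahlfors–David regular boundary measure `σ` over `∂Ω ∩ B(p,r)` is controlled by
the Lebesgue integral of `f` over `Ω ∩ B(p,2r)`. -/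
theorem fubini_shadow_estimate {n : ℕ} (hn : 2 ≤ n)
    (Ω : Set (EuclideanSpace ℝ (Fin n))) (hbd : Bornology.IsBounded Ω)
    (hop : IsOpen Ω) (hne : Ω.Nonempty) (hproper : Ω ≠ Set.univ)
    (σ : Measure (EuclideanSpace ℝ (Fin n))) (C₀ : ℝ) (hC₀ : 0 < C₀)
    (hσ : ∀ y ∈ frontier Ω, ∀ t : ℝ, 0 < t →
      σ (frontier Ω ∩ Metric.closedBall y t) ≤ ENNReal.ofReal (C₀ * t ^ (n - 1)))
    (αt : ℝ) (hαt : 0 < αt)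
    (p : EuclideanSpace ℝ (Fin n)) (hp : p ∈ frontier Ω) (r : ℝ) (hr : 0 < r)
    (f : EuclideanSpace ℝ (Fin n) → ℝ≥0∞) (hf : Measurable f) :
    (∫⁻ q in frontier Ω ∩ Metric.ball p r,
        (∫⁻ x in ({x ∈ Ω | ‖x - q‖ ≤ (1 + αt) * Metric.infDist x (frontier Ω)} ∩
            Metric.ball q r),
          f x * ENNReal.ofReal (‖x - q‖ ^ ((1 : ℝ) - n))) ∂σ)
      ≤ ENNReal.ofReal (C₀ * (2 + αt) ^ (n - 1)) *
          ∫⁻ x in Ω ∩ Metric.ball p (2 * r), f x :=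
  fubini_shadow_estimate_general hn Ω hop σ C₀ hσ αt hαt p hp r hr f hf
end

section
/- Let n ≥ 1 and for each r ∈ ℝ let R(r) : ℝⁿ → ℝⁿ be a linear isometric equivalence (a rotation) of Euclidean space ℝⁿ. Define F : ℝⁿ → ℝⁿ by F(x) = R(‖x‖)(x), and assume F is Borel measurable. Then F preserves Lebesgue measure: the pushforward of the Lebesgue measure under F equals the Lebesgue measure; in particular, for every Borel set U ⊆ ℝⁿ one has vol(F⁻¹(U)) = vol(U). -/
/-!
In polar coordinates `x ↦ (‖x‖⁻¹ • x, ‖x‖)` on `E \ {0}` an additive Haar measure becomes a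
product of the measure `μ.toSphere` on the unit sphere and a measure on `(0, ∞)`, and the map
`x ↦ R ‖x‖ x` becomes the skew product `(v, r) ↦ (R r v, r)`. A linear isometry preserves every
additive Haar measure, and `μ.toSphere s` is computed from the cone `(0, 1) • s`, so each fibre
map `R r` preserves `μ.toSphere`; hence the skew product preserves the product measure.
-/

open MeasureTheory Measure Metric Set
open scoped Pointwise

namespace LinearIsometryEquiv

variable {E F : Type*} [NormedAddCommGroup E] [NormedSpace ℝ E] [NormedAddCommGroup F]
  [NormedSpace ℝ F]

theorem preimage_set_smul (e : E ≃ₗᵢ[ℝ] F) (t : Set ℝ) (A : Set F) :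
    e ⁻¹' (t • A) = t • e ⁻¹' A := by
  rw [← e.symm_symm, ← image_eq_preimage_symm, ← image_eq_preimage_symm, ← image2_smul,
    ← image2_smul]
  exact image_image2_distrib_right fun c x => e.symm.map_smul c x

def restrictUnitSphere (e : E ≃ₗᵢ[ℝ] E) : sphere (0 : E) 1 → sphere (0 : E) 1 :=
  MapsTo.restrict e _ _ fun x hx => by simpa using hx

@[simp]
theorem coe_restrictUnitSphere (e : E ≃ₗᵢ[ℝ] E) (v : sphere (0 : E) 1) :
    (e.restrictUnitSphere v : E) = e v :=
  rfl

variable [FiniteDimensional ℝ E] [MeasurableSpace E] [BorelSpace E]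
  (μ : Measure E) [μ.IsAddHaarMeasure]

/-- `map e μ` is a Haar measure, hence a multiple of `μ`; the factor is `1` because `e` maps the
unit ball onto itself. -/
theorem measurePreserving_addHaar (e : E ≃ₗᵢ[ℝ] E) : MeasurePreserving e μ μ := by
  refine ⟨e.continuous.measurable, ?_⟩
  have : (map e μ).IsAddHaarMeasure := e.toContinuousLinearEquiv.isAddHaarMeasure_map μ
  have hball : map e μ (ball 0 1) = μ (ball 0 1) := by
    rw [map_apply e.continuous.measurable measurableSet_ball, e.preimage_ball, map_zero]
  rw [isAddLeftInvariant_eq_smul (map e μ) μ, Measure.smul_apply, ENNReal.smul_def,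
    smul_eq_mul] at hball
  have hfactor :=
    (ENNReal.mul_eq_right (measure_ball_pos μ 0 one_pos).ne' measure_ball_lt_top.ne).1 hball
  rw [isAddLeftInvariant_eq_smul (map e μ) μ, ENNReal.coe_eq_one.1 hfactor, one_smul]

theorem measurePreserving_restrictUnitSphere (e : E ≃ₗᵢ[ℝ] E) :
    MeasurePreserving e.restrictUnitSphere μ.toSphere μ.toSphere := by
  have hm : Measurable e.restrictUnitSphere := (e.continuous.restrict _).measurable
  refine ⟨hm, Measure.ext fun s hs => ?_⟩
  have himage : ((↑) '' (e.restrictUnitSphere ⁻¹' s) : Set E) = e ⁻¹' ((↑) '' s) := by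
    ext x
    constructor
    · rintro ⟨v, hv, rfl⟩
      exact ⟨_, hv, rfl⟩
    · rintro ⟨v, hv, hx⟩
      have hxs : x ∈ sphere (0 : E) 1 := by simp [← e.norm_map x, ← hx]
      have hxv : e.restrictUnitSphere ⟨x, hxs⟩ = v := Subtype.ext hx.symm
      exact ⟨⟨x, hxs⟩, by rwa [mem_preimage, hxv], rfl⟩
  rw [map_apply hm hs, toSphere_apply' _ hs, toSphere_apply' _ (hm hs), himage,
    ← preimage_set_smul, (measurePreserving_addHaar μ e).measure_preimage_emb
      e.toHomeomorph.measurableEmbedding]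

end LinearIsometryEquiv

section

variable {E : Type*} [NormedAddCommGroup E] [NormedSpace ℝ E] [FiniteDimensional ℝ E]
  [MeasurableSpace E] [BorelSpace E] (μ : Measure E) [μ.IsAddHaarMeasure]

theorem measurePreserving_coe_comp_homeomorphUnitSphereProd_symm [Nontrivial E] :
    MeasurePreserving (Subtype.val ∘ (homeomorphUnitSphereProd E).symm)
      (μ.toSphere.prod (volumeIoiPow (Module.finrank ℝ E - 1))) μ := by
  have hP : MeasurePreserving (homeomorphUnitSphereProd E).symm
      (μ.toSphere.prod (volumeIoiPow (Module.finrank ℝ E - 1))) (μ.comap (↑)) :=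
    μ.measurePreserving_homeomorphUnitSphereProd.symm (homeomorphUnitSphereProd E).toMeasurableEquiv
  refine ⟨measurable_subtype_coe.comp (homeomorphUnitSphereProd E).symm.measurable, ?_⟩
  rw [← map_map measurable_subtype_coe hP.measurable, hP.map_eq,
    (MeasurableEmbedding.subtype_coe (measurableSet_singleton 0).compl).map_comap,
    Subtype.range_coe, restrict_compl_singleton]

theorem measurePreserving_rotation_by_norm (R : ℝ → E ≃ₗᵢ[ℝ] E)
    (hm : Measurable fun x => R ‖x‖ x) : MeasurePreserving (fun x => R ‖x‖ x) μ μ := by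
  rcases subsingleton_or_nontrivial E with hE | hE
  · convert MeasurePreserving.id μ
  set P := homeomorphUnitSphereProd E
  set ν := μ.toSphere.prod (volumeIoiPow (Module.finrank ℝ E - 1))
  let G : sphere (0 : E) 1 × Ioi (0 : ℝ) → sphere (0 : E) 1 × Ioi (0 : ℝ) :=
    fun p => ((R p.2).restrictUnitSphere p.1, p.2)
  have hPG : ∀ p, (P.symm (G p) : E) = R ‖(P.symm p : E)‖ (P.symm p) := by
    rintro ⟨v, r, hr⟩
    simp [P, G, norm_smul, abs_of_pos hr.out]
  have hGm : Measurable G := by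
    have hG_eq : G = fun p => P ⟨R ‖(P.symm p : E)‖ (P.symm p),
        (map_ne_zero_iff _ (R _).injective).2 (P.symm p).2⟩ := by
      funext p
      apply P.symm.injective
      ext
      simp [hPG]
    rw [hG_eq]
    exact P.measurable.comp (hm.comp (measurable_subtype_coe.comp P.symm.measurable)).subtype_mk
  -- `skew_product` wants the base on the left, so conjugate by `Prod.swap`.
  have hG : MeasurePreserving G ν ν := by
    have hskew := (MeasurePreserving.id (volumeIoiPow (Module.finrank ℝ E - 1))).skew_product
      (g := fun r => (R r).restrictUnitSphere) (measurable_fst.comp (hGm.comp measurable_swap))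
      (ae_of_all _ fun r => ((R r).measurePreserving_restrictUnitSphere μ).map_eq)
    exact measurePreserving_swap.comp (hskew.comp measurePreserving_swap)
  have hpolar := measurePreserving_coe_comp_homeomorphUnitSphereProd_symm μ
  refine ⟨hm, ?_⟩
  calc map (fun x => R ‖x‖ x) μ
      = map ((fun x => R ‖x‖ x) ∘ Subtype.val ∘ P.symm) ν := by
        rw [← map_map hm hpolar.measurable, hpolar.map_eq]
    _ = map ((Subtype.val ∘ P.symm) ∘ G) ν := by
        congr 1
        funext p
        exact (hPG p).symm
    _ = μ := (hpolar.comp hG).map_eq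

end

theorem rotation_by_norm_measure_preserving_general {n : ℕ}
    (R : ℝ → (EuclideanSpace ℝ (Fin n) ≃ₗᵢ[ℝ] EuclideanSpace ℝ (Fin n)))
    (F : EuclideanSpace ℝ (Fin n) → EuclideanSpace ℝ (Fin n))
    (hF : ∀ x, F x = R ‖x‖ x) (hFm : Measurable F) :
    Measure.map F (volume : Measure (EuclideanSpace ℝ (Fin n))) = volume ∧
      ∀ U : Set (EuclideanSpace ℝ (Fin n)), MeasurableSet U →
        volume (F ⁻¹' U) = volume U := by
  obtain rfl : F = fun x => R ‖x‖ x := funext hF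
  have hpres := measurePreserving_rotation_by_norm volume R hFm
  exact ⟨hpres.map_eq, fun U hU => hpres.measure_preimage hU.nullMeasurableSet⟩

/-- The sphere-by-sphere rotation map `F(x) = R(‖x‖)(x)`, where each `R(r)` is a linear
isometric equivalence of `ℝⁿ`, preserves Lebesgue measure: the pushforward of the volume
under `F` is the volume, and `vol(F⁻¹(U)) = vol(U)` for every Borel set `U`. -/
theorem rotation_by_norm_measure_preserving {n : ℕ} (hn : 1 ≤ n)
    (R : ℝ → (EuclideanSpace ℝ (Fin n) ≃ₗᵢ[ℝ] EuclideanSpace ℝ (Fin n)))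
    (F : EuclideanSpace ℝ (Fin n) → EuclideanSpace ℝ (Fin n))
    (hF : ∀ x, F x = R ‖x‖ x) (hFm : Measurable F) :
    Measure.map F (volume : Measure (EuclideanSpace ℝ (Fin n))) = volume ∧
      ∀ U : Set (EuclideanSpace ℝ (Fin n)), MeasurableSet U →
        volume (F ⁻¹' U) = volume U :=
  rotation_by_norm_measure_preserving_general R F hF hFm
end

section
/- Let n ≥ 2, let φ : ℝⁿ → ℝ be continuously differentiable, and let 0 < r₂ < r₁. Let μ denote the surface measure on the unit sphere S^{n−1} ⊆ ℝⁿ, normalized so that Lebesgue measure on ℝⁿ has the polar decomposition ∫_{ℝⁿ} h(x) dx = ∫_0^∞ ∫_{S^{n−1}} h(r·ω) r^{n−1} dμ(ω) dr. Then for every μ-measurable set A ⊆ S^{n−1}, ∫_A |φ(r₁·ω) − φ(r₂·ω)| dμ(ω) ≤ ∫_{U} ‖∇φ(x)‖·‖x‖^{1−n} dx, where U := {r·ω : ω ∈ A, r₂ ≤ r ≤ r₁} is the spherical sector over A between the radii r₂ and r₁ and ∇φ denotes the gradient (Fréchet derivative) of φ. -/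
open Metric Set MeasureTheory ENNReal

/-!
Along each ray the fundamental theorem of calculus bounds `|φ(r₁ω) − φ(r₂ω)|` by
`∫_{r₂}^{r₁} ‖∇φ(rω)‖ dr`. Integrating over `ω ∈ A` and writing
`‖∇φ(rω)‖ = (‖∇φ(x)‖ ‖x‖^{1−n}) · r^{n−1}` at `x = rω`, the polar decomposition turns the
iterated integral into the integral of `‖∇φ(x)‖ ‖x‖^{1−n}` over the sector. Tonelli applies
because the polar decomposition forces `μ` to be finite.
-/

theorem enorm_sub_le_setLIntegral_enorm_deriv {F : Type*} [NormedAddCommGroup F]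
    [NormedSpace ℝ F] [CompleteSpace F] {f f' : ℝ → F} {a b : ℝ} (hab : a ≤ b)
    (hf : ∀ t ∈ Icc a b, HasDerivAt f (f' t) t) (hf' : IntegrableOn f' (Icc a b)) :
    ‖f b - f a‖ₑ ≤ ∫⁻ t in Ioc a b, ‖f' t‖ₑ := by
  have hftc : ∫ t in Ioc a b, f' t = f b - f a := by
    rw [← intervalIntegral.integral_of_le hab]
    exact intervalIntegral.integral_eq_sub_of_hasDerivAt (by rwa [uIcc_of_le hab])
      ((intervalIntegrable_iff_integrableOn_Icc_of_le hab).2 hf')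
  exact hftc ▸ enorm_integral_le_lintegral_enorm _

theorem enorm_sub_radial_le_setLIntegral_enorm_fderiv {E F : Type*} [NormedAddCommGroup E]
    [NormedSpace ℝ E] [NormedAddCommGroup F] [NormedSpace ℝ F] [CompleteSpace F] {φ : E → F}
    (hφ : ContDiff ℝ 1 φ) {a b : ℝ} (hab : a ≤ b) {ω : E} (hω : ‖ω‖ ≤ 1) :
    ‖φ (b • ω) - φ (a • ω)‖ₑ ≤ ∫⁻ t in Ioc a b, ‖fderiv ℝ φ (t • ω)‖ₑ := by
  have hDφ : Continuous fun t : ℝ => fderiv ℝ φ (t • ω) :=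
    (hφ.continuous_fderiv one_ne_zero).comp (continuous_id.smul continuous_const)
  calc ‖φ (b • ω) - φ (a • ω)‖ₑ ≤ ∫⁻ t in Ioc a b, ‖fderiv ℝ φ (t • ω) ω‖ₑ := by
        refine enorm_sub_le_setLIntegral_enorm_deriv (f := fun t : ℝ => φ (t • ω)) hab
          (fun t _ => ?_) (hDφ.clm_apply continuous_const).integrableOn_Icc
        exact (hφ.differentiable one_ne_zero _).hasFDerivAt.comp_hasDerivAt t
          ((hasDerivAt_id t).smul_const ω |>.congr_deriv (one_smul ℝ ω))
    _ ≤ ∫⁻ t in Ioc a b, ‖fderiv ℝ φ (t • ω)‖ₑ := by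
        refine lintegral_mono fun t => ?_
        calc ‖fderiv ℝ φ (t • ω) ω‖ₑ ≤ ‖fderiv ℝ φ (t • ω)‖ₑ * ‖ω‖ₑ :=
              (fderiv ℝ φ (t • ω)).le_opENorm ω
          _ ≤ ‖fderiv ℝ φ (t • ω)‖ₑ := mul_le_of_le_one_right' (by simpa [← ofReal_norm] using hω)

section

variable {E : Type*} [NormedAddCommGroup E] [NormedSpace ℝ E]

/-- The sector is described through the polar coordinates `(‖x‖, x / ‖x‖)` rather than as an
image, so that its measurability is immediate. -/
def polarSector (A : Set (sphere (0 : E) 1)) (a b : ℝ) : Set E :=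
  {x | ‖x‖ ∈ Ioc a b ∧ ‖x‖⁻¹ • x ∈ Subtype.val '' A}

theorem smul_mem_polarSector_iff {A : Set (sphere (0 : E) 1)} {a b r : ℝ} (hr : 0 < r)
    (ω : sphere (0 : E) 1) : r • (ω : E) ∈ polarSector A a b ↔ r ∈ Ioc a b ∧ ω ∈ A := by
  have hnorm : ‖r • (ω : E)‖ = r := by simp [norm_smul, abs_of_pos hr]
  simp [polarSector, hnorm, inv_smul_smul₀ hr.ne']

theorem polarSector_subset {A : Set (sphere (0 : E) 1)} {a b : ℝ} (ha : 0 ≤ a) :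
    polarSector A a b ⊆ {x | ∃ ω ∈ A, ∃ r : ℝ, a ≤ r ∧ r ≤ b ∧ x = r • (ω : E)} := by
  rintro x ⟨⟨hax, hxb⟩, ω, hω, hωx⟩
  refine ⟨ω, hω, ‖x‖, hax.le, hxb, ?_⟩
  rw [hωx, smul_inv_smul₀ (ha.trans_lt hax).ne']

variable [MeasurableSpace E]

def HasPolarDecomposition (ν : Measure E) (μ : Measure (sphere (0 : E) 1)) (d : ℕ) : Prop :=
  ∀ h : E → ℝ≥0∞, Measurable h →
    ∫⁻ x, h x ∂ν = ∫⁻ r in Ioi (0 : ℝ), (∫⁻ ω, h (r • (ω : E)) ∂μ) * ENNReal.ofReal (r ^ d)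

variable [BorelSpace E]

theorem measurableSet_polarSector [SecondCountableTopology E] {A : Set (sphere (0 : E) 1)}
    (hA : MeasurableSet A) (a b : ℝ) : MeasurableSet (polarSector A a b) :=
  (measurable_norm measurableSet_Ioc).inter
    ((measurable_norm.inv.smul measurable_id) (isClosed_sphere.measurableSet.subtype_image hA))

namespace HasPolarDecomposition

variable {ν : Measure E} {μ : Measure (sphere (0 : E) 1)} {d : ℕ}

theorem isFiniteMeasure [ProperSpace E] [IsFiniteMeasureOnCompacts ν]
    (hμ : HasPolarDecomposition ν μ d) : IsFiniteMeasure μ := by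
  refine ⟨lt_of_le_of_lt ?_ (measure_closedBall_lt_top (μ := ν) (x := 0) (r := 2))⟩
  have hball : ∀ r ∈ Icc (1 : ℝ) 2, ∀ ω : sphere (0 : E) 1, r • (ω : E) ∈ closedBall 0 2 := by
    intro r hr ω
    simpa [norm_smul, abs_of_pos (one_pos.trans_le hr.1)] using hr.2
  calc μ univ = ∫⁻ _ in Icc (1 : ℝ) 2, μ univ * 1 := by norm_num
    _ ≤ ∫⁻ r in Icc (1 : ℝ) 2,
          (∫⁻ ω, (closedBall (0 : E) 2).indicator 1 (r • (ω : E)) ∂μ) * ENNReal.ofReal (r ^ d) := by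
        refine setLIntegral_mono' measurableSet_Icc fun r hr => mul_le_mul' ?_ ?_
        · simp [hball r hr]
        · simpa using one_le_pow₀ hr.1
    _ ≤ ∫⁻ r in Ioi (0 : ℝ),
          (∫⁻ ω, (closedBall (0 : E) 2).indicator 1 (r • (ω : E)) ∂μ) * ENNReal.ofReal (r ^ d) :=
        lintegral_mono_set fun r hr => one_pos.trans_le hr.1
    _ = ν (closedBall 0 2) := by
        rw [← hμ _ (measurable_one.indicator measurableSet_closedBall),
          lintegral_indicator_one measurableSet_closedBall]

theorem setLIntegral_polarSector [SecondCountableTopology E] [SFinite μ]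
    (hμ : HasPolarDecomposition ν μ d) {g : E → ℝ≥0∞} (hg : Measurable g)
    {A : Set (sphere (0 : E) 1)} (hA : MeasurableSet A) {a b : ℝ} (ha : 0 ≤ a) :
    ∫⁻ x in polarSector A a b, g x ∂ν
      = ∫⁻ ω in A, (∫⁻ r in Ioc a b, g (r • (ω : E)) * ENNReal.ofReal (r ^ d)) ∂μ := by
  have hslice : ∀ r ∈ Ioi (0 : ℝ),
      (∫⁻ ω, (polarSector A a b).indicator g (r • (ω : E)) ∂μ) * ENNReal.ofReal (r ^ d)
        = (Ioc a b).indicator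
            (fun r => ∫⁻ ω in A, g (r • (ω : E)) * ENNReal.ofReal (r ^ d) ∂μ) r := by
    intro r hr
    by_cases hrab : r ∈ Ioc a b
    · rw [indicator_of_mem hrab, lintegral_mul_const' _ _ ofReal_ne_top,
        ← lintegral_indicator hA]
      refine congrArg (· * _) (lintegral_congr fun ω => ?_)
      classical
      simp only [indicator_apply, smul_mem_polarSector_iff hr, hrab, true_and]
    · simp [smul_mem_polarSector_iff hr, hrab]
  have hmeas : Measurable fun p : ℝ × sphere (0 : E) 1 =>
      g (p.1 • (p.2 : E)) * ENNReal.ofReal (p.1 ^ d) :=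
    (hg.comp (measurable_fst.smul (measurable_subtype_coe.comp measurable_snd))).mul
      (measurable_fst.pow_const d).ennreal_ofReal
  calc ∫⁻ x in polarSector A a b, g x ∂ν
      = ∫⁻ r in Ioi (0 : ℝ), (Ioc a b).indicator
          (fun r => ∫⁻ ω in A, g (r • (ω : E)) * ENNReal.ofReal (r ^ d) ∂μ) r := by
        rw [← lintegral_indicator (measurableSet_polarSector hA a b),
          hμ _ (hg.indicator (measurableSet_polarSector hA a b))]
        exact setLIntegral_congr_fun measurableSet_Ioi hslice
    _ = ∫⁻ r in Ioc a b, ∫⁻ ω in A, g (r • (ω : E)) * ENNReal.ofReal (r ^ d) ∂μ := by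
        rw [lintegral_indicator measurableSet_Ioc, Measure.restrict_restrict measurableSet_Ioc,
          inter_eq_left.2 (Ioc_subset_Ioi_self.trans (Ioi_subset_Ioi ha))]
    _ = _ := lintegral_lintegral_swap hmeas.aemeasurable

end HasPolarDecomposition

end

theorem rpow_one_sub_mul_pow_pred {r : ℝ} (hr : 0 < r) {n : ℕ} (hn : 1 ≤ n) :
    r ^ ((1 : ℝ) - n) * r ^ (n - 1) = 1 := by
  rw [show (1 : ℝ) - n = -((n - 1 : ℕ) : ℝ) by push_cast [hn]; ring, Real.rpow_neg hr.le,
    Real.rpow_natCast, inv_mul_cancel₀ (pow_pos hr _).ne']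

/-- Fundamental-theorem-of-calculus/polar-coordinates estimate: for a `C¹` function `φ`,
the integral over a spherical cap `A` of the oscillation `|φ(r₁ω) − φ(r₂ω)|` is bounded by
the integral of `‖∇φ(x)‖·‖x‖^{1−n}` over the spherical sector over `A` between the radii
`r₂` and `r₁`. Here `μ` is the surface measure on the unit sphere, normalized so that
Lebesgue measure has the polar decomposition
`∫ h dx = ∫_0^∞ ∫_{S^{n−1}} h(rω) r^{n−1} dμ(ω) dr`. -/
theorem radial_oscillation_le_cone_integral {n : ℕ} (hn : 2 ≤ n)
    (φ : EuclideanSpace ℝ (Fin n) → ℝ) (hφ : ContDiff ℝ 1 φ)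
    (r₁ r₂ : ℝ) (hr₂ : 0 < r₂) (hr : r₂ < r₁)
    (μ : Measure (Metric.sphere (0 : EuclideanSpace ℝ (Fin n)) 1))
    (hμ : ∀ h : EuclideanSpace ℝ (Fin n) → ℝ≥0∞, Measurable h →
      (∫⁻ x, h x) = ∫⁻ r in Set.Ioi (0 : ℝ),
        (∫⁻ ω, h (r • (ω : EuclideanSpace ℝ (Fin n))) ∂μ) * ENNReal.ofReal (r ^ (n - 1)))
    (A : Set (Metric.sphere (0 : EuclideanSpace ℝ (Fin n)) 1)) (hA : MeasurableSet A) :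
    (∫⁻ ω in A, ENNReal.ofReal
        |φ (r₁ • (ω : EuclideanSpace ℝ (Fin n))) - φ (r₂ • (ω : EuclideanSpace ℝ (Fin n)))| ∂μ)
      ≤ ∫⁻ x in {x : EuclideanSpace ℝ (Fin n) |
            ∃ ω ∈ A, ∃ r : ℝ, r₂ ≤ r ∧ r ≤ r₁ ∧ x = r • (ω : EuclideanSpace ℝ (Fin n))},
          ENNReal.ofReal (‖fderiv ℝ φ x‖ * ‖x‖ ^ ((1 : ℝ) - n)) := by
  have hpolar : HasPolarDecomposition volume μ (n - 1) := hμ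
  have := hpolar.isFiniteMeasure
  set g : EuclideanSpace ℝ (Fin n) → ℝ≥0∞ :=
    fun x => ENNReal.ofReal (‖fderiv ℝ φ x‖ * ‖x‖ ^ ((1 : ℝ) - n)) with hg_def
  have hg : Measurable g :=
    ((hφ.continuous_fderiv one_ne_zero).measurable.norm.mul
      (measurable_norm.pow_const _)).ennreal_ofReal
  have hweight : ∀ ω : sphere (0 : EuclideanSpace ℝ (Fin n)) 1, ∀ r ∈ Ioc r₂ r₁,
      ‖fderiv ℝ φ (r • (ω : EuclideanSpace ℝ (Fin n)))‖ₑ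
        = g (r • (ω : EuclideanSpace ℝ (Fin n))) * ENNReal.ofReal (r ^ (n - 1)) := by
    intro ω r hr
    have hr₀ : 0 < r := hr₂.trans hr.1
    rw [hg_def, ← ENNReal.ofReal_mul (by positivity), norm_smul, norm_eq_of_mem_sphere,
      Real.norm_of_nonneg hr₀.le, mul_one, mul_assoc,
      rpow_one_sub_mul_pow_pred hr₀ (one_le_two.trans hn), mul_one, ofReal_norm]
  calc (∫⁻ ω in A, ENNReal.ofReal
        |φ (r₁ • (ω : EuclideanSpace ℝ (Fin n))) - φ (r₂ • (ω : EuclideanSpace ℝ (Fin n)))| ∂μ)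
      ≤ ∫⁻ ω in A, (∫⁻ r in Ioc r₂ r₁,
          ‖fderiv ℝ φ (r • (ω : EuclideanSpace ℝ (Fin n)))‖ₑ) ∂μ := by
        refine lintegral_mono fun ω => ?_
        rw [← Real.enorm_eq_ofReal_abs]
        exact enorm_sub_radial_le_setLIntegral_enorm_fderiv hφ hr.le (norm_eq_of_mem_sphere ω).le
    _ = ∫⁻ ω in A, (∫⁻ r in Ioc r₂ r₁,
          g (r • (ω : EuclideanSpace ℝ (Fin n))) * ENNReal.ofReal (r ^ (n - 1))) ∂μ :=
        lintegral_congr fun ω => setLIntegral_congr_fun measurableSet_Ioc (hweight ω)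
    _ = ∫⁻ x in polarSector A r₂ r₁, g x := (hpolar.setLIntegral_polarSector hg hA hr₂.le).symm
    _ ≤ _ := lintegral_mono_set (polarSector_subset hr₂.le)
end

section
/- Let n ≥ 2, let 0 < θ < 1, and let x₁, x₂ ∈ ℝⁿ \ {0} satisfy ‖x₂‖ ≤ θ·‖x₁‖. Write r₁ := ‖x₁‖ and r₂ := ‖x₂‖. Then there exist a two-dimensional linear subspace P ⊆ ℝⁿ with x₁ ∈ P and x₂ ∈ P, and a Lipschitz continuous curve γ : [r₂, r₁] → ℝⁿ such that: γ(r₂) = x₂, γ(r₁) = x₁, γ(r) ∈ P and ‖γ(r)‖ = r for every r ∈ [r₂, r₁] (so γ meets each sphere centered at 0 of radius between r₂ and r₁ exactly once), and the length of γ (its total variation over [r₂, r₁]) is at most (1 + 2π/(1 − θ))·‖x₁ − x₂‖. -/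
/-!
Identify a plane through `0`, `x₁`, `x₂` isometrically with `ℂ`. There, let the modulus and the
argument move together affinely from `(‖x₂‖, arg x₂)` to `(‖x₁‖, arg x₁)`, parametrized by the
modulus. The argument changes by at most `2π` while the modulus changes by `‖x₁‖ - ‖x₂‖`, so the
curve is Lipschitz with constant `1 + 2π‖x₁‖ / (‖x₁‖ - ‖x₂‖)` and has length at most
`(‖x₁‖ - ‖x₂‖) + 2π‖x₁‖`. Lacunarity gives `(1 - θ)‖x₁‖ ≤ ‖x₁‖ - ‖x₂‖ ≤ ‖x₁ - x₂‖`.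
-/

open Set

open Module in
theorem Submodule.exists_le_finrank_eq {K V : Type*} [DivisionRing K] [AddCommGroup V]
    [Module K V] [FiniteDimensional K V] (W : Submodule K V) {k : ℕ}
    (hW : finrank K W ≤ k) (hk : k ≤ finrank K V) :
    ∃ W' : Submodule K V, W ≤ W' ∧ finrank K W' = k := by
  induction k with
  | zero => exact ⟨W, le_rfl, Nat.le_zero.1 hW⟩
  | succ k ih =>
    rcases hW.eq_or_lt with hW | hW
    · exact ⟨W, le_rfl, hW⟩
    obtain ⟨W', hWW', hW'⟩ := ih (Nat.lt_succ_iff.1 hW) (Nat.le_of_succ_le hk)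
    obtain ⟨v, hv⟩ : ∃ v, v ∉ W' := by
      by_contra! h
      rw [Submodule.eq_top_iff'.2 h, finrank_top] at hW'
      omega
    exact ⟨W' ⊔ span K {v}, hWW'.trans le_sup_left, by rw [finrank_sup_span_singleton hv, hW']⟩

theorem LipschitzOnWith.eVariationOn_Icc_le {E : Type*} [PseudoEMetricSpace E] {f : ℝ → E}
    {K : NNReal} {a b : ℝ} (hf : LipschitzOnWith K f (Icc a b)) :
    eVariationOn f (Icc a b) ≤ K * ENNReal.ofReal (b - a) := by
  simpa [eVariationOn_id_Icc] using hf.comp_eVariationOn_le (mapsTo_id _)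

theorem dist_circleMap_zero_le (r s a b : ℝ) :
    dist (circleMap 0 r a) (circleMap 0 s b) ≤ |r - s| + |s| * |a - b| :=
  calc dist (circleMap 0 r a) (circleMap 0 s b)
      ≤ dist (circleMap 0 r a) (circleMap 0 s a) + dist (circleMap 0 s a) (circleMap 0 s b) :=
        dist_triangle _ _ _
    _ ≤ |r - s| + |s| * |a - b| := by
      gcongr
      · rw [dist_eq_norm, circleMap_zero, circleMap_zero, ← sub_mul, ← Complex.ofReal_sub,
          norm_mul, Complex.norm_real, Complex.norm_exp_ofReal_mul_I, mul_one, Real.norm_eq_abs]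
      · simpa [Real.dist_eq] using (lipschitzWith_circleMap 0 s).dist_le_mul a b

theorem Complex.abs_arg_sub_arg_le (z w : ℂ) : |arg z - arg w| ≤ 2 * Real.pi := by
  rw [abs_sub_le_iff]
  constructor <;> linarith [neg_pi_lt_arg z, arg_le_pi z, neg_pi_lt_arg w, arg_le_pi w]

open Real in
theorem Complex.exists_curve_norm_eq_of_norm_lt {z₁ z₂ : ℂ} (h : ‖z₂‖ < ‖z₁‖) :
    ∃ g : ℝ → ℂ, g ‖z₂‖ = z₂ ∧ g ‖z₁‖ = z₁ ∧ (∀ r ∈ Icc ‖z₂‖ ‖z₁‖, ‖g r‖ = r) ∧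
      LipschitzOnWith (1 + 2 * π * ‖z₁‖ / (‖z₁‖ - ‖z₂‖)).toNNReal g (Icc ‖z₂‖ ‖z₁‖) := by
  have hgap : 0 < ‖z₁‖ - ‖z₂‖ := sub_pos.2 h
  set c := (arg z₁ - arg z₂) / (‖z₁‖ - ‖z₂‖)
  have hc : |c| ≤ 2 * π / (‖z₁‖ - ‖z₂‖) := by
    rw [abs_div, abs_of_pos hgap]
    gcongr
    exact abs_arg_sub_arg_le z₁ z₂
  refine ⟨fun r ↦ circleMap 0 r (arg z₂ + c * (r - ‖z₂‖)), ?_, ?_, ?_, ?_⟩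
  · simp [circleMap_zero, norm_mul_exp_arg_mul_I]
  · have : arg z₂ + c * (‖z₁‖ - ‖z₂‖) = arg z₁ := by
      rw [div_mul_cancel₀ _ hgap.ne']; ring
    simp only [this, circleMap_zero, norm_mul_exp_arg_mul_I]
  · intro r hr
    rw [norm_circleMap_zero, abs_of_nonneg ((norm_nonneg _).trans hr.1)]
  · refine LipschitzOnWith.of_dist_le' fun r _ s hs ↦ ?_
    have hs₀ : 0 ≤ s := (norm_nonneg _).trans hs.1
    have hangle : arg z₂ + c * (r - ‖z₂‖) - (arg z₂ + c * (s - ‖z₂‖)) = c * (r - s) := by ring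
    calc _ ≤ |r - s| + |s| * |c * (r - s)| := hangle ▸ dist_circleMap_zero_le r s _ _
      _ ≤ |r - s| + ‖z₁‖ * (2 * π / (‖z₁‖ - ‖z₂‖) * |r - s|) := by
          rw [abs_mul, abs_of_nonneg hs₀]
          gcongr
          exact hs.2
      _ = (1 + 2 * π * ‖z₁‖ / (‖z₁‖ - ‖z₂‖)) * dist r s := by
          rw [Real.dist_eq]; ring

open Real Module in
theorem Submodule.exists_curve_norm_eq_of_finrank_eq_two {E : Type*} [NormedAddCommGroup E]
    [InnerProductSpace ℝ E] {P : Submodule ℝ E} (hP : finrank ℝ P = 2) {x₁ x₂ : E}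
    (hx₁ : x₁ ∈ P) (hx₂ : x₂ ∈ P) (h : ‖x₂‖ < ‖x₁‖) :
    ∃ γ : ℝ → E, γ ‖x₂‖ = x₂ ∧ γ ‖x₁‖ = x₁ ∧ (∀ r ∈ Icc ‖x₂‖ ‖x₁‖, γ r ∈ P ∧ ‖γ r‖ = r) ∧
      LipschitzOnWith (1 + 2 * π * ‖x₁‖ / (‖x₁‖ - ‖x₂‖)).toNNReal γ (Icc ‖x₂‖ ‖x₁‖) := by
  have : FiniteDimensional ℝ P := Module.finite_of_finrank_eq_succ hP
  let e : P ≃ₗᵢ[ℝ] ℂ :=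
    (stdOrthonormalBasis ℝ P).equiv Complex.orthonormalBasisOneI (finCongr hP)
  let ι : ℂ →ₗᵢ[ℝ] E := P.subtypeₗᵢ.comp e.symm.toLinearIsometry
  have hnorm : ∀ x (hx : x ∈ P), ‖e ⟨x, hx⟩‖ = ‖x‖ := fun x hx ↦ e.norm_map _
  obtain ⟨g, hg₂, hg₁, hg, hlip⟩ :=
    Complex.exists_curve_norm_eq_of_norm_lt (z₁ := e ⟨x₁, hx₁⟩) (z₂ := e ⟨x₂, hx₂⟩)
      (by rwa [hnorm, hnorm])
  simp only [hnorm] at hg₂ hg₁ hg hlip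
  refine ⟨ι ∘ g, ?_, ?_, fun r hr ↦ ⟨?_, ?_⟩, ?_⟩
  · simp [ι, hg₂]
  · simp [ι, hg₁]
  · simp [ι]
  · exact (ι.norm_map _).trans (hg r hr)
  · simpa using ι.lipschitz.comp_lipschitzOnWith hlip

theorem curve_between_lacunary_spheres_general {n : ℕ} (hn : 2 ≤ n)
    (θ : ℝ) (hθ1 : θ < 1)
    (x₁ x₂ : EuclideanSpace ℝ (Fin n)) (hx₁ : x₁ ≠ 0)
    (hlac : ‖x₂‖ ≤ θ * ‖x₁‖) :
    ∃ P : Submodule ℝ (EuclideanSpace ℝ (Fin n)),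
      Module.finrank ℝ P = 2 ∧ x₁ ∈ P ∧ x₂ ∈ P ∧
      ∃ γ : ℝ → EuclideanSpace ℝ (Fin n),
        (∃ K : NNReal, LipschitzOnWith K γ (Set.Icc ‖x₂‖ ‖x₁‖)) ∧
        γ ‖x₂‖ = x₂ ∧ γ ‖x₁‖ = x₁ ∧
        (∀ r ∈ Set.Icc ‖x₂‖ ‖x₁‖, γ r ∈ P ∧ ‖γ r‖ = r) ∧
        eVariationOn γ (Set.Icc ‖x₂‖ ‖x₁‖) ≤
          ENNReal.ofReal ((1 + 2 * Real.pi / (1 - θ)) * ‖x₁ - x₂‖) := by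
  have hlt : ‖x₂‖ < ‖x₁‖ := hlac.trans_lt (mul_lt_of_lt_one_left (norm_pos_iff.2 hx₁) hθ1)
  obtain ⟨P, hspan, hP⟩ := (Submodule.span ℝ (range ![x₁, x₂])).exists_le_finrank_eq (k := 2)
    ((finrank_range_le_card ![x₁, x₂]).trans_eq (Fintype.card_fin 2)) (by simpa using hn)
  have hx₁P : x₁ ∈ P := hspan (Submodule.subset_span ⟨0, rfl⟩)
  have hx₂P : x₂ ∈ P := hspan (Submodule.subset_span ⟨1, rfl⟩)
  obtain ⟨γ, hγ₂, hγ₁, hγ, hlip⟩ := P.exists_curve_norm_eq_of_finrank_eq_two hP hx₁P hx₂P hlt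
  refine ⟨P, hP, hx₁P, hx₂P, γ, ⟨_, hlip⟩, hγ₂, hγ₁, hγ, hlip.eVariationOn_Icc_le.trans ?_⟩
  have hgap : 0 < ‖x₁‖ - ‖x₂‖ := sub_pos.2 hlt
  have hθ : 0 < 1 - θ := sub_pos.2 hθ1
  have hr₁ : ‖x₁‖ ≤ ‖x₁ - x₂‖ / (1 - θ) := by
    rw [le_div_iff₀ hθ]; nlinarith [norm_sub_norm_le x₁ x₂]
  rw [ENNReal.ofNNReal_toNNReal, ← ENNReal.ofReal_mul (by positivity)]
  refine ENNReal.ofReal_le_ofReal ?_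
  calc (1 + 2 * Real.pi * ‖x₁‖ / (‖x₁‖ - ‖x₂‖)) * (‖x₁‖ - ‖x₂‖)
      = (‖x₁‖ - ‖x₂‖) + 2 * Real.pi * ‖x₁‖ := by field_simp
    _ ≤ ‖x₁ - x₂‖ + 2 * Real.pi * (‖x₁ - x₂‖ / (1 - θ)) := by
        gcongr
        exact norm_sub_norm_le x₁ x₂
    _ = (1 + 2 * Real.pi / (1 - θ)) * ‖x₁ - x₂‖ := by ring

/-- Two nonzero points of `ℝⁿ` (`n ≥ 2`) on spheres whose radii are separated by the
lacunarity factor `θ` can be joined, within a two-dimensional subspace containing both,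
by a Lipschitz curve parametrized by the distance to the origin (meeting each intermediate
sphere exactly once) whose length is at most `(1 + 2π/(1−θ))·‖x₁ − x₂‖`. -/
theorem curve_between_lacunary_spheres {n : ℕ} (hn : 2 ≤ n)
    (θ : ℝ) (hθ0 : 0 < θ) (hθ1 : θ < 1)
    (x₁ x₂ : EuclideanSpace ℝ (Fin n)) (hx₁ : x₁ ≠ 0) (hx₂ : x₂ ≠ 0)
    (hlac : ‖x₂‖ ≤ θ * ‖x₁‖) :
    ∃ P : Submodule ℝ (EuclideanSpace ℝ (Fin n)),
      Module.finrank ℝ P = 2 ∧ x₁ ∈ P ∧ x₂ ∈ P ∧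
      ∃ γ : ℝ → EuclideanSpace ℝ (Fin n),
        (∃ K : NNReal, LipschitzOnWith K γ (Set.Icc ‖x₂‖ ‖x₁‖)) ∧
        γ ‖x₂‖ = x₂ ∧ γ ‖x₁‖ = x₁ ∧
        (∀ r ∈ Set.Icc ‖x₂‖ ‖x₁‖, γ r ∈ P ∧ ‖γ r‖ = r) ∧
        eVariationOn γ (Set.Icc ‖x₂‖ ‖x₁‖) ≤
          ENNReal.ofReal ((1 + 2 * Real.pi / (1 - θ)) * ‖x₁ - x₂‖) :=
  curve_between_lacunary_spheres_general hn θ hθ1 x₁ x₂ hx₁ hlac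
end
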